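/- Let π : X → Y be a 1-block factor map from a two-sided 1-step mixing shift of finite type X onto the sofic shift Y = π(X), and let y be a periodic point in Y. Then there exist conjugacies (shift-commuting homeomorphisms) φ : X → X̄ and ψ : Y → Ȳ onto shift spaces X̄ and Ȳ such that π̄ := ψ∘π∘φ⁻¹ : X̄ → Ȳ is a 1-block factor map and, for ȳ = ψ(y) and all integers m ≤ n, the set of blocks π̄⁻¹(ȳ)|_{[m,n]} (restrictions to [m,n] of points of X̄ mapped to ȳ) equals the set π̄⁻¹(ȳ|_{[m,n]}) of all blocks of X̄ of the same length mapped by the block map of π̄ to the word ȳ|_{[m,n]}. -/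

import Mathlib

open MeasureTheory Filter Topology
open scoped ENNReal

namespace GibbsPaper

universe u

variable {A : Type*} {B : Type*}

/-- The shift map `(σ x) i = x (i+1)` on the full shift `ℤ → A`. -/
def shiftMap (x : ℤ → A) : ℤ → A := fun i => x (i + 1)

/-- The 1-step shift of finite type determined by the allowed-transition set `E`. -/
def SFT (E : Set (A × A)) : Set (ℤ → A) := {x | ∀ i : ℤ, (x i, x (i + 1)) ∈ E}

/-- `w` is a word of the language of `X`. -/
def WordIn (X : Set (ℤ → A)) (w : List A) : Prop :=
  ∃ x ∈ X, ∃ k : ℤ, ∀ j : Fin w.length, x (k + (j.1 : ℤ)) = w.get j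

/-- `X` is (topologically) mixing. -/
def Mixing (X : Set (ℤ → A)) : Prop :=
  ∀ u w : List A, WordIn X u → WordIn X w →
    ∃ N : ℕ, ∀ n : ℕ, N ≤ n → ∃ v : List A, v.length = n ∧ WordIn X (u ++ v ++ w)

/-- The 1-block (sliding block) code induced by a symbol map `Φ`. -/
def blockCode (Φ : A → B) (x : ℤ → A) : ℤ → B := fun i => Φ (x i)

/-- The fiber `π⁻¹(y)` of the 1-block factor map induced by `Φ`. -/
def fiber (X : Set (ℤ → A)) (Φ : A → A) (y : ℤ → A) : Set (ℤ → A) :=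
  {x | x ∈ X ∧ blockCode Φ x = y}

/-- `xb` is a right `m`-bridge from `x` to `x'` (all of them preimages of `y`). -/
def RightBridge (X : Set (ℤ → A)) (Φ : A → A) (y x x' xb : ℤ → A) (m : ℤ) : Prop :=
  xb ∈ fiber X Φ y ∧ (∀ i : ℤ, i ≤ m → xb i = x i) ∧
    ∃ n : ℤ, m < n ∧ ∀ i : ℤ, n ≤ i → xb i = x' i

/-- Right transition `x →ʳ x'`: a right `m`-bridge from `x` to `x'` for every `m`. -/
def RightTrans (X : Set (ℤ → A)) (Φ : A → A) (y x x' : ℤ → A) : Prop :=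
  ∀ m : ℤ, ∃ xb : ℤ → A, RightBridge X Φ y x x' xb m

/-- Right equivalence `x ∼ʳ x'`. -/
def RightEquiv (X : Set (ℤ → A)) (Φ : A → A) (y x x' : ℤ → A) : Prop :=
  RightTrans X Φ y x x' ∧ RightTrans X Φ y x' x

/-- The right transition class of `x` over `y`. -/
def rightClass (X : Set (ℤ → A)) (Φ : A → A) (y x : ℤ → A) : Set (ℤ → A) :=
  {x' | x' ∈ fiber X Φ y ∧ RightEquiv X Φ y x x'}

/-- `C` is a right transition class over `y`. -/
def IsRightClass (X : Set (ℤ → A)) (Φ : A → A) (y : ℤ → A) (C : Set (ℤ → A)) : Prop :=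
  ∃ x ∈ fiber X Φ y, C = rightClass X Φ y x

/-- Transition `C →ʳ C'` between right classes. -/
def ClassTrans (X : Set (ℤ → A)) (Φ : A → A) (y : ℤ → A) (C C' : Set (ℤ → A)) : Prop :=
  ∃ x ∈ C, ∃ x' ∈ C', RightTrans X Φ y x x'

/-- `xb` is a left `m`-bridge from `x` to `x'`. -/
def LeftBridge (X : Set (ℤ → A)) (Φ : A → A) (y x x' xb : ℤ → A) (m : ℤ) : Prop :=
  xb ∈ fiber X Φ y ∧ (∀ i : ℤ, m ≤ i → xb i = x i) ∧
    ∃ n : ℤ, n < m ∧ ∀ i : ℤ, i ≤ n → xb i = x' i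

/-- Left transition `x →ˡ x'`. -/
def LeftTrans (X : Set (ℤ → A)) (Φ : A → A) (y x x' : ℤ → A) : Prop :=
  ∀ m : ℤ, ∃ xb : ℤ → A, LeftBridge X Φ y x x' xb m

/-- Left equivalence `x ∼ˡ x'`. -/
def LeftEquiv (X : Set (ℤ → A)) (Φ : A → A) (y x x' : ℤ → A) : Prop :=
  LeftTrans X Φ y x x' ∧ LeftTrans X Φ y x' x

/-- The left transition class of `x` over `y`. -/
def leftClass (X : Set (ℤ → A)) (Φ : A → A) (y x : ℤ → A) : Set (ℤ → A) :=
  {x' | x' ∈ fiber X Φ y ∧ LeftEquiv X Φ y x x'}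

/-- `C` is a left transition class over `y`. -/
def IsLeftClass (X : Set (ℤ → A)) (Φ : A → A) (y : ℤ → A) (C : Set (ℤ → A)) : Prop :=
  ∃ x ∈ fiber X Φ y, C = leftClass X Φ y x

/-- Two points are left asymptotic. -/
def LeftAsymp (y y' : ℤ → A) : Prop := ∃ n : ℤ, ∀ i : ℤ, i ≤ n → y i = y' i

/-- Two points are right asymptotic. -/
def RightAsymp (y y' : ℤ → A) : Prop := ∃ n : ℤ, ∀ i : ℤ, n ≤ i → y i = y' i

/-- The factor map induced by `Φ` is right continuing. -/
def RightContinuing (X : Set (ℤ → A)) (Φ : A → A) : Prop :=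
  ∀ x ∈ X, ∀ y ∈ blockCode Φ '' X, LeftAsymp (blockCode Φ x) y →
    ∃ x' ∈ fiber X Φ y, LeftAsymp x x'

/-- The factor map induced by `Φ` is left continuing. -/
def LeftContinuing (X : Set (ℤ → A)) (Φ : A → A) : Prop :=
  ∀ x ∈ X, ∀ y ∈ blockCode Φ '' X, RightAsymp (blockCode Φ x) y →
    ∃ x' ∈ fiber X Φ y, RightAsymp x x'

/-- Bi-continuing factor map. -/
def BiContinuing (X : Set (ℤ → A)) (Φ : A → A) : Prop :=
  RightContinuing X Φ ∧ LeftContinuing X Φ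

/-- `y` is a (σ-)periodic point. -/
def IsPeriodicPt (y : ℤ → A) : Prop := ∃ p : ℕ, 0 < p ∧ shiftMap^[p] y = y

/-- `p` is the smallest period of the periodic point `y`. -/
def IsLeastPeriod (y : ℤ → A) (p : ℕ) : Prop :=
  0 < p ∧ shiftMap^[p] y = y ∧ ∀ q : ℕ, 0 < q → shiftMap^[q] y = y → p ≤ q

/-- The set `C` has period `p` (`σᵖ C = C`). -/
def HasClassPeriod (C : Set (ℤ → A)) (p : ℕ) : Prop :=
  0 < p ∧ (shiftMap^[p]) '' C = C

/-- `p` is the smallest period of the set `C`. -/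
def IsLeastClassPeriod (C : Set (ℤ → A)) (p : ℕ) : Prop :=
  HasClassPeriod C p ∧ ∀ q : ℕ, HasClassPeriod C q → p ≤ q

/-- The cylinder set of the word `w` placed at coordinate `k`. -/
def cylList (k : ℤ) (w : List A) : Set (ℤ → A) :=
  {x | ∀ j : Fin w.length, x (k + (j.1 : ℤ)) = w.get j}

/-- The cylinder set of all points agreeing with `z` on the coordinates `[m, n]`. -/
def cylSeg (z : ℤ → A) (m n : ℤ) : Set (ℤ → A) :=
  {x | ∀ i : ℤ, m ≤ i → i ≤ n → x i = z i}

/-- The union of the cylinder sets (on coordinates `[m,n]`) of the blocks appearing in `S`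
on the interval `[m,n]`. -/
def blockUnion (S : Set (ℤ → A)) (m n : ℤ) : Set (ℤ → A) :=
  {x | ∃ x' ∈ S, ∀ i : ℤ, m ≤ i → i ≤ n → x i = x' i}

/-- The transition-probability weight of a chain starting at `a`. -/
noncomputable def chainProb (P : A → A → ℝ≥0∞) : A → List A → ℝ≥0∞
  | _, [] => 1
  | a, b :: l => P a b * chainProb P b l

/-- The Markov probability of a word. -/
noncomputable def wordProb (p : A → ℝ≥0∞) (P : A → A → ℝ≥0∞) : List A → ℝ≥0∞
  | [] => 1
  | a :: l => p a * chainProb P a l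

/-- `μ` is the 1-step (stationary) Markov measure on `X` with initial probability vector `p`
and stochastic matrix `P`. -/
structure IsMarkov [Fintype A] [MeasurableSpace A] (X : Set (ℤ → A))
    (μ : Measure (ℤ → A)) (p : A → ℝ≥0∞) (P : A → A → ℝ≥0∞) : Prop where
  isProb : IsProbabilityMeasure μ
  shiftInv : ∀ s : Set (ℤ → A), MeasurableSet s → μ (shiftMap ⁻¹' s) = μ s
  initSum : ∑ a : A, p a = 1
  rowSum : ∀ a : A, ∑ b : A, P a b = 1
  cylIn : ∀ w : List A, WordIn X w → μ (cylList 0 w) = wordProb p P w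
  cylOut : ∀ w : List A, ¬ WordIn X w → μ (cylList 0 w) = 0

/-- `μ` gives positive measure to every cylinder of a word of the language of `X`. -/
def FullySupported [Fintype A] [MeasurableSpace A] (X : Set (ℤ → A))
    (μ : Measure (ℤ → A)) : Prop :=
  ∀ w : List A, WordIn X w → 0 < μ (cylList 0 w)

/-- `μ` is a fully supported 1-step Markov measure on `X`. -/
def IsFSMarkov [Fintype A] [MeasurableSpace A] (X : Set (ℤ → A))
    (μ : Measure (ℤ → A)) : Prop :=
  ∃ p P, IsMarkov X μ p P ∧ FullySupported X μ

/-- Birkhoff sum `S_0^{n-1} f (z)`. -/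
def birkhoff (f : (ℤ → A) → ℝ) (z : ℤ → A) (n : ℕ) : ℝ :=
  ∑ j ∈ Finset.range n, f (shiftMap^[j] z)

/-- The two-sided Gibbs inequality for `ν` on `Y` with potential `f`, constants `K₁, K₂`
and pressure constant `Pr`. -/
def GibbsIneq [Fintype A] [MeasurableSpace A] (Y : Set (ℤ → A)) (ν : Measure (ℤ → A))
    (f : (ℤ → A) → ℝ) (K₁ K₂ Pr : ℝ) : Prop :=
  ∀ z ∈ Y, ∀ n : ℕ, 1 ≤ n →
    K₁ < (ν (cylSeg z 0 ((n : ℤ) - 1))).toReal /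
        Real.exp (-(n : ℝ) * Pr + birkhoff f z n) ∧
    (ν (cylSeg z 0 ((n : ℤ) - 1))).toReal /
        Real.exp (-(n : ℝ) * Pr + birkhoff f z n) < K₂

/-- `ν` is a Gibbs measure on `Y` for the potential `f`. -/
def IsGibbs [Fintype A] [MeasurableSpace A] (Y : Set (ℤ → A)) (ν : Measure (ℤ → A))
    (f : (ℤ → A) → ℝ) : Prop :=
  ∃ K₁ K₂ Pr : ℝ, 0 < K₁ ∧ 0 < K₂ ∧ GibbsIneq Y ν f K₁ K₂ Pr


/-- `φ` is a sliding block code on `S`: it is shift-commuting and its values are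
determined by a finite window of coordinates (this is the Curtis–Hedlund–Lyndon
characterization of continuous shift-commuting maps). -/
def SlidingBlockOn (S : Set (ℤ → A)) (φ : (ℤ → A) → (ℤ → B)) : Prop :=
  (∀ x ∈ S, φ (shiftMap x) = shiftMap (φ x)) ∧
  ∃ R : ℕ, ∀ x ∈ S, ∀ x' ∈ S, ∀ i : ℤ,
    (∀ j : ℤ, i - (R : ℤ) ≤ j → j ≤ i + (R : ℤ) → x j = x' j) → φ x i = φ x' i

/-!
Let `p` be a period of `y` and `q = p |A|`. Recode `X` by pairing each symbol `x i` with the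
`π`-image of the window `x[i - q, i + q]`, and `Y` likewise by pairing `z i` with
`z[i - q, i + q]`; both recodings are inverted by reading off the first coordinate, and `Ψ`
applies `Φ` to that coordinate.
If a recoded block on `[m, n]` maps to `ȳ`, the underlying `x` lies over `y` on
`[m - q, n + q]`. Pigeonholing on (position mod `p`, symbol), each margin of length `q`
contains a loop of `x` whose length is a multiple of `p`; repeating these two loops outward
turns `x` into a point of `π⁻¹(y)` that still agrees with `x` on `[m, n]`, hence has the same
recoded block there.
-/

lemma shiftMap_iterate_apply (n : ℕ) (x : ℤ → A) (i : ℤ) :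
    (shiftMap^[n] x) i = x (i + n) := by
  induction n generalizing x with
  | zero => simp
  | succ n ih =>
    rw [Function.iterate_succ_apply, ih, shiftMap]
    push_cast
    ring_nf

lemma IsPeriodicPt.exists_periodic {y : ℤ → A} (hy : IsPeriodicPt y) :
    ∃ p : ℕ, 0 < p ∧ Function.Periodic y (p : ℤ) := by
  obtain ⟨p, hp, hyp⟩ := hy
  exact ⟨p, hp, fun i => by rw [← shiftMap_iterate_apply p y i, hyp]⟩

lemma _root_.Function.Periodic.of_dvd {y : ℤ → B} {p d : ℤ} (hy : Function.Periodic y p)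
    (hpd : p ∣ d) : Function.Periodic y d := by
  obtain ⟨c, rfl⟩ := hpd
  simpa [mul_comm] using hy.int_mul c

lemma exists_lt_dvd_sub_eq [Fintype A] (x : ℤ → A) {p n : ℕ} (hp : 0 < p)
    (hn : p * Fintype.card A ≤ n) (c : ℤ) :
    ∃ s t : ℤ, c ≤ s ∧ s < t ∧ t ≤ c + n ∧ (p : ℤ) ∣ t - s ∧ x s = x t := by
  have : NeZero p := ⟨hp.ne'⟩
  have hcard : (Finset.univ : Finset (ZMod p × A)).card < (Finset.Icc c (c + n)).card := by
    simp only [Finset.card_univ, Fintype.card_prod, ZMod.card, Int.card_Icc]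
    omega
  obtain ⟨s, hs, t, ht, hst, hxst⟩ := Finset.exists_ne_map_eq_of_card_lt_of_maps_to hcard
    (f := fun i : ℤ => ((i : ZMod p), x i)) (fun _ _ => Finset.mem_univ _)
  simp only [Prod.mk.injEq, ZMod.intCast_eq_intCast_iff_dvd_sub] at hxst
  rw [Finset.mem_Icc] at hs ht
  rcases hst.lt_or_gt with h | h
  · exact ⟨s, t, hs.1, h, ht.2, hxst.1, hxst.2⟩
  · exact ⟨t, s, ht.1, h, hs.2, (dvd_sub_comm.mp hxst.1), hxst.2.symm⟩

def periodize (x : ℤ → A) (s t : ℤ) : ℤ → A := fun l => x (s + (l - s) % (t - s))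

def splice (x x' : ℤ → A) (k : ℤ) : ℤ → A := fun l => if l < k then x l else x' l

section Splicing

variable {E : Set (A × A)} {x x' : ℤ → A} {s t k : ℤ}

lemma periodize_eqOn (hst : s < t) (hxst : x s = x t) :
    Set.EqOn (periodize x s t) x (Set.Icc s t) := by
  rintro l ⟨hsl, hlt⟩
  rcases hlt.lt_or_eq with hlt | rfl
  · rw [periodize, Int.emod_eq_of_lt (sub_nonneg.mpr hsl) (by omega), add_sub_cancel]
  · simp [periodize, hxst]

lemma periodize_mem_SFT (hx : x ∈ SFT E) (hst : s < t) (hxst : x s = x t) :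
    periodize x s t ∈ SFT E := by
  intro l
  have hr := Int.emod_nonneg (l - s) (sub_ne_zero.mpr hst.ne')
  have hr' := Int.emod_lt_of_pos (l - s) (sub_pos.mpr hst)
  have hnext : (l + 1 - s) % (t - s) = ((l - s) % (t - s) + 1) % (t - s) := by
    rw [Int.emod_add_emod]; ring_nf
  simp only [periodize, hnext]
  rcases (show (l - s) % (t - s) + 1 < t - s ∨ (l - s) % (t - s) + 1 = t - s by omega) with h | h
  · rw [Int.emod_eq_of_lt (by omega) h, ← add_assoc]
    exact hx _
  · rw [h, Int.emod_self, add_zero, hxst]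
    convert hx (t - 1) using 2 <;> congr 1 <;> omega

lemma blockCode_periodize {Φ : A → B} {y : ℤ → B} (hy : Function.Periodic y (t - s))
    (hxy : ∀ l ∈ Set.Ico s t, Φ (x l) = y l) (hst : s < t) :
    blockCode Φ (periodize x s t) = y := by
  funext l
  have hr := Int.emod_nonneg (l - s) (sub_ne_zero.mpr hst.ne')
  have hr' := Int.emod_lt_of_pos (l - s) (sub_pos.mpr hst)
  have hl : s + (l - s) % (t - s) = l - (l - s) / (t - s) * (t - s) := by
    rw [Int.emod_def]; ring
  simp only [blockCode, periodize]
  rw [hxy _ ⟨by omega, by omega⟩, hl, ← smul_eq_mul, hy.sub_zsmul_eq]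

lemma splice_mem_SFT (hx : x ∈ SFT E) (hx' : x' ∈ SFT E) (hk : x k = x' k) :
    splice x x' k ∈ SFT E := by
  intro l
  simp only [splice]
  split_ifs with h₁ h₂ h₂
  · exact hx l
  · obtain rfl : l + 1 = k := by omega
    rw [← hk]; exact hx l
  · omega
  · exact hx' l

end Splicing

lemma exists_mem_SFT_blockCode_eq_eqOn [Fintype A] {E : Set (A × A)} {Φ : A → B} {y : ℤ → B}
    {p n : ℕ} (hp : 0 < p) (hy : Function.Periodic y p) (hn : p * Fintype.card A ≤ n)
    {x : ℤ → A} (hx : x ∈ SFT E) {a b : ℤ} (hab : a ≤ b)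
    (hxy : ∀ l ∈ Set.Icc (a - n) (b + n), Φ (x l) = y l) :
    ∃ x' ∈ SFT E, blockCode Φ x' = y ∧ Set.EqOn x' x (Set.Icc a b) := by
  -- repeat a loop of `x` left of `a` and another one right of `b`, both of length divisible by `p`
  obtain ⟨s, t, hs, hst, ht, hpst, hxst⟩ := exists_lt_dvd_sub_eq x hp hn (a - n)
  obtain ⟨s', t', hs', hst', ht', hpst', hxst'⟩ := exists_lt_dvd_sub_eq x hp hn b
  have hleft : splice (periodize x s t) x s ∈ SFT E :=
    splice_mem_SFT (periodize_mem_SFT hx hst hxst) hx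
      (periodize_eqOn hst hxst ⟨le_rfl, hst.le⟩)
  refine ⟨splice (splice (periodize x s t) x s) (periodize x s' t') t',
    splice_mem_SFT hleft (periodize_mem_SFT hx hst' hxst') ?_, ?_, ?_⟩
  · rw [periodize_eqOn hst' hxst' ⟨hst'.le, le_rfl⟩]
    simp only [splice, if_neg (show ¬t' < s by omega)]
  · funext l
    simp only [blockCode, splice]
    split_ifs with h₁ h₂
    · exact congrFun (blockCode_periodize (hy.of_dvd hpst)
        (fun l ⟨_, _⟩ => hxy l ⟨by omega, by omega⟩) hst) l
    · exact hxy l ⟨by omega, by omega⟩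
    · exact congrFun (blockCode_periodize (hy.of_dvd hpst')
        (fun l ⟨_, _⟩ => hxy l ⟨by omega, by omega⟩) hst') l
  · rintro l ⟨hal, hlb⟩
    simp only [splice, if_pos (show l < t' by omega), if_neg (show ¬l < s by omega)]

def window (q : ℕ) (x : ℤ → A) (i : ℤ) : Fin (2 * q + 1) → A := fun j => x (i - q + j)

def windowCode (q : ℕ) (F : (Fin (2 * q + 1) → A) → B) (x : ℤ → A) : ℤ → B :=
  fun i => F (window q x i)

section Window

variable {q : ℕ} {x x' : ℤ → A} {i : ℤ}

@[simp]
lemma window_center : window q x i ⟨q, by omega⟩ = x i := by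
  simp [window]

lemma window_shiftMap : window q (shiftMap x) i = window q x (i + 1) := by
  funext j
  simp only [window, shiftMap]
  ring_nf

lemma window_congr (h : Set.EqOn x x' (Set.Icc (i - q) (i + q))) :
    window q x i = window q x' i := by
  funext j
  exact h ⟨by simp, by have := j.isLt; omega⟩

lemma eqOn_of_window_eq {m n : ℤ} (hmn : m ≤ n)
    (h : ∀ i ∈ Set.Icc m n, window q x i = window q x' i) :
    Set.EqOn x x' (Set.Icc (m - q) (n + q)) := by
  rintro l ⟨hl, hl'⟩
  set i := max m (min l n)
  have hj : (l - (i - q)).toNat < 2 * q + 1 := by omega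
  have := congrFun (h i ⟨le_max_left _ _, max_le hmn (min_le_right _ _)⟩) ⟨_, hj⟩
  simpa only [window, Int.toNat_of_nonneg (show 0 ≤ l - (i - q) by omega), add_sub_cancel]
    using this

lemma slidingBlockOn_windowCode (S : Set (ℤ → A)) (q : ℕ)
    (F : (Fin (2 * q + 1) → A) → B) :
    SlidingBlockOn S (windowCode q F) :=
  ⟨fun x _ => funext fun i => by simp only [windowCode, window_shiftMap, shiftMap],
    q, fun x _ x' _ i h => congrArg F (window_congr fun j hj => h j hj.1 hj.2)⟩

end Window

theorem local_retract_general
    {A : Type u} [Fintype A] (E : Set (A × A)) (Φ : A → A) (X : Set (ℤ → A))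
    (hX : X = SFT E)
    (Y : Set (ℤ → A))
    (y : ℤ → A) (hyper : IsPeriodicPt y) :
    ∃ (B : Type u) (_ : Fintype B)
      (φ : (ℤ → A) → (ℤ → B)) (φinv : (ℤ → B) → (ℤ → A))
      (ψ : (ℤ → A) → (ℤ → B)) (ψinv : (ℤ → B) → (ℤ → A)) (Ψ : B → B),
      -- `φ` is a conjugacy from `X` onto `X̄ = φ '' X`
      SlidingBlockOn X φ ∧ SlidingBlockOn (φ '' X) φinv ∧ (∀ x ∈ X, φinv (φ x) = x) ∧
      -- `ψ` is a conjugacy from `Y` onto `Ȳ = ψ '' Y`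
      SlidingBlockOn Y ψ ∧ SlidingBlockOn (ψ '' Y) ψinv ∧ (∀ z ∈ Y, ψinv (ψ z) = z) ∧
      -- `π̄ = ψ ∘ π ∘ φ⁻¹` is the 1-block map induced by `Ψ`
      (∀ x ∈ X, blockCode Ψ (φ x) = ψ (blockCode Φ x)) ∧
      -- `π̄⁻¹(ȳ)|_{[m,n]} = π̄⁻¹(ȳ|_{[m,n]})`
      (∀ m n : ℤ, m ≤ n →
        (fun xb : ℤ → B => fun i : (Set.Icc m n : Set ℤ) => xb i.1) ''
            {xb | xb ∈ φ '' X ∧ blockCode Ψ xb = ψ y}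
          = (fun xb : ℤ → B => fun i : (Set.Icc m n : Set ℤ) => xb i.1) ''
            {xb | xb ∈ φ '' X ∧ ∀ i : ℤ, m ≤ i → i ≤ n → Ψ (xb i) = ψ y i}) := by
  subst hX
  obtain ⟨p, hp, hy⟩ := hyper.exists_periodic
  set q := p * Fintype.card A
  let B := A × (Fin (2 * q + 1) → A)
  let φ : (ℤ → A) → ℤ → B := windowCode q fun w => (w ⟨q, by omega⟩, Φ ∘ w)
  let ψ : (ℤ → A) → ℤ → B := windowCode q fun w => (w ⟨q, by omega⟩, w)
  let center : (ℤ → B) → ℤ → A := windowCode 0 fun w => (w 0).1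
  refine ⟨B, inferInstance, φ, center, ψ, center, Prod.map Φ id,
    slidingBlockOn_windowCode .., slidingBlockOn_windowCode .., fun x _ => ?_,
    slidingBlockOn_windowCode .., slidingBlockOn_windowCode .., fun z _ => ?_,
    fun x _ => rfl, fun m n hmn => Set.Subset.antisymm ?_ ?_⟩
  · funext i; simp [center, φ, windowCode, window]
  · funext i; simp [center, ψ, windowCode, window]
  · rintro _ ⟨xb, ⟨hxb, hΨ⟩, rfl⟩
    exact ⟨xb, ⟨hxb, fun i _ _ => congrFun hΨ i⟩, rfl⟩
  · rintro _ ⟨_, ⟨⟨x, hx, rfl⟩, hΨ⟩, rfl⟩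
    have hover : Set.EqOn (blockCode Φ x) y (Set.Icc (m - q) (n + q)) :=
      eqOn_of_window_eq hmn fun i hi => congrArg Prod.snd (hΨ i hi.1 hi.2)
    obtain ⟨x', hx', rfl, hx'x⟩ :=
      exists_mem_SFT_blockCode_eq_eqOn hp hy le_rfl hx hmn fun l hl => hover hl
    refine ⟨φ x', ⟨⟨x', hx', rfl⟩, rfl⟩, ?_⟩
    refine funext fun ⟨i, hmi, hin⟩ => Prod.ext ?_ ?_
    · simpa [φ, windowCode] using hx'x ⟨hmi, hin⟩
    · change window q (blockCode Φ x') i = window q (blockCode Φ x) i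
      exact (window_congr fun l ⟨_, _⟩ => hover ⟨by omega, by omega⟩).symm

/-- **Lemma 4.1 (local retract).**
Given a periodic point `y ∈ Y` there are conjugacies `φ : X → X̄` and `ψ : Y → Ȳ`
such that `π̄ = ψ ∘ π ∘ φ⁻¹` is a 1-block factor map (with block map `Ψ`) for which
the blocks of preimages of `ȳ = ψ(y)` on any interval `[m,n]` are exactly the blocks
of `X̄` on `[m,n]` mapped by `Ψ` to `ȳ|_{[m,n]}`. -/
theorem local_retract
    {A : Type u} [Fintype A] (E : Set (A × A)) (Φ : A → A) (X : Set (ℤ → A))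
    (hX : X = SFT E) (hmix : Mixing X)
    (Y : Set (ℤ → A)) (hY : Y = blockCode Φ '' X)
    (y : ℤ → A) (hy : y ∈ Y) (hyper : IsPeriodicPt y) :
    ∃ (B : Type u) (_ : Fintype B)
      (φ : (ℤ → A) → (ℤ → B)) (φinv : (ℤ → B) → (ℤ → A))
      (ψ : (ℤ → A) → (ℤ → B)) (ψinv : (ℤ → B) → (ℤ → A)) (Ψ : B → B),
      -- `φ` is a conjugacy from `X` onto `X̄ = φ '' X`
      SlidingBlockOn X φ ∧ SlidingBlockOn (φ '' X) φinv ∧ (∀ x ∈ X, φinv (φ x) = x) ∧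
      -- `ψ` is a conjugacy from `Y` onto `Ȳ = ψ '' Y`
      SlidingBlockOn Y ψ ∧ SlidingBlockOn (ψ '' Y) ψinv ∧ (∀ z ∈ Y, ψinv (ψ z) = z) ∧
      -- `π̄ = ψ ∘ π ∘ φ⁻¹` is the 1-block map induced by `Ψ`
      (∀ x ∈ X, blockCode Ψ (φ x) = ψ (blockCode Φ x)) ∧
      -- `π̄⁻¹(ȳ)|_{[m,n]} = π̄⁻¹(ȳ|_{[m,n]})`
      (∀ m n : ℤ, m ≤ n →
        (fun xb : ℤ → B => fun i : (Set.Icc m n : Set ℤ) => xb i.1) ''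
            {xb | xb ∈ φ '' X ∧ blockCode Ψ xb = ψ y}
          = (fun xb : ℤ → B => fun i : (Set.Icc m n : Set ℤ) => xb i.1) ''
            {xb | xb ∈ φ '' X ∧ ∀ i : ℤ, m ≤ i → i ≤ n → Ψ (xb i) = ψ y i}) :=
  local_retract_general E Φ X hX Y y hyper

end GibbsPaper
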